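/- Let n ≥ 3 and let ρ^{(1)},…,ρ^{(n−1)} be bipartite density matrices, with the n-partite pair-entangled-network state τ = ⊗_{i=1}^{n−1} ρ^{(i)}_{A_iB_i} on the star graph with center party A = A₁⋯A_{n−1} and leaf parties B₁,…,B_{n−1}. If ρ^{(1)} is nonsteerable from B₁ to A₁, then every conditional probability distribution P(a b₁…b_{n−1} | x y₁…y_{n−1}) obtained by applying local POVMs to τ (one POVM family for A and one for each B_i) is of the form P = ∑_λ q(λ) P₁(b₁|y₁,λ) P₂(a b₂…b_{n−1} | x y₂…y_{n−1}, λ) with q(λ) ≥ 0 summing to 1 and P₂ nonsignalling; in particular, τ is not genuinely multipartite nonlocal. -/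

import Mathlib

open scoped BigOperators ComplexOrder

noncomputable section

/-- Projector onto the `d`-dimensional maximally entangled state
`|φ⁺_d⟩ = (1/√d) ∑ᵢ |ii⟩`, as a matrix on `ℂ^d ⊗ ℂ^d`. -/
def phiPlus (d : ℕ) : Matrix (Fin d × Fin d) (Fin d × Fin d) ℂ :=
  fun x y => if x.1 = x.2 ∧ y.1 = y.2 then (1 / (d : ℂ)) else 0

/-- The `d`-dimensional isotropic state with visibility `p`:
`ρ(p) = p φ⁺_d + (1-p) 𝟙/d²`. -/
def iso (d : ℕ) (p : ℝ) : Matrix (Fin d × Fin d) (Fin d × Fin d) ℂ :=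
  (p : ℂ) • phiPlus d +
    (((1 - p) / (d : ℝ) ^ 2 : ℝ) : ℂ) • (1 : Matrix (Fin d × Fin d) (Fin d × Fin d) ℂ)

/-- The (possibly unnormalized) projector `|ψ⟩⟨ψ|` onto a vector `ψ`. -/
def vecProj {ι : Type} (ψ : ι → ℂ) : Matrix ι ι ℂ :=
  fun i j => ψ i * (starRingEnd ℂ) (ψ j)

section Nonlocality

variable {ι : Type} [Fintype ι] [DecidableEq ι]

/-- A (conditional) probability distribution: outputs `a i`, inputs `x i` for each
party `i`. -/
def IsDist {A X : ι → Type} [∀ i, Fintype (A i)]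
    (P : ((i : ι) → A i) → ((i : ι) → X i) → ℝ) : Prop :=
  (∀ a x, 0 ≤ P a x) ∧ ∀ x, ∑ a, P a x = 1

/-- The marginal distribution of the outputs of the parties in `S`. -/
def marginal {A X : ι → Type} [∀ i, Fintype (A i)] [∀ i, DecidableEq (A i)]
    (P : ((i : ι) → A i) → ((i : ι) → X i) → ℝ)
    (S : Finset ι) (aS : (i : {i // i ∈ S}) → A i.1) (x : (i : ι) → X i) : ℝ :=
  ∑ b : {b : (i : ι) → A i // ∀ i : {i // i ∈ S}, b i.1 = aS i}, P b.1 x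

/-- A conditional distribution is nonsignalling if, for every subset `S` of parties,
the marginal of the outputs of the parties in `S` does not depend on the inputs of the
parties outside `S`. -/
def NonSignalling {A X : ι → Type} [∀ i, Fintype (A i)] [∀ i, DecidableEq (A i)]
    (P : ((i : ι) → A i) → ((i : ι) → X i) → ℝ) : Prop :=
  ∀ (S : Finset ι) (aS : (i : {i // i ∈ S}) → A i.1) (x x' : (i : ι) → X i),
    (∀ i ∈ S, x i = x' i) → marginal P S aS x = marginal P S aS x'

/-- A multipartite conditional distribution is bilocal if it is a convex combination,
over nonempty proper subsets `M` of the parties and hidden variables `λ`, of products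
of nonsignalling conditional distributions for the parties in `M` and in `Mᶜ`. -/
def Bilocal {A X : ι → Type} [∀ i, Fintype (A i)] [∀ i, DecidableEq (A i)]
    (P : ((i : ι) → A i) → ((i : ι) → X i) → ℝ) : Prop :=
  ∃ (Λ : Type) (_ : Fintype Λ) (q : Finset ι → Λ → ℝ)
    (P₁ : (M : Finset ι) → Λ →
      (((i : {i // i ∈ M}) → A i.1) → ((i : {i // i ∈ M}) → X i.1) → ℝ))
    (P₂ : (M : Finset ι) → Λ →
      (((i : {i // i ∉ M}) → A i.1) → ((i : {i // i ∉ M}) → X i.1) → ℝ)),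
    (∀ M l, 0 ≤ q M l) ∧ (∑ M, ∑ l, q M l) = 1 ∧
    (∀ M l, q M l ≠ 0 →
      M.Nonempty ∧ M ≠ Finset.univ ∧
      IsDist (P₁ M l) ∧ IsDist (P₂ M l) ∧
      NonSignalling (P₁ M l) ∧ NonSignalling (P₂ M l)) ∧
    ∀ a x, P a x =
      ∑ M, ∑ l, q M l * P₁ M l (fun i => a i.1) (fun i => x i.1) *
        P₂ M l (fun i => a i.1) (fun i => x i.1)

/-- The tensor product `⊗ᵢ F i` of one-party operators, as a matrix on the
multipartite space. -/
def prodOp {H : ι → Type} (F : (i : ι) → Matrix (H i) (H i) ℂ) :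
    Matrix ((i : ι) → H i) ((i : ι) → H i) ℂ :=
  fun u v => ∏ i, F i (u i) (v i)

/-- The outcome distribution produced by applying local POVMs
`E i (x i) (a i)` (input `x i`, outcome `a i` for party `i`) to the multipartite
state `ρ`. -/
def born {H : ι → Type} [∀ i, Fintype (H i)] [∀ i, DecidableEq (H i)]
    {A X : ι → Type}
    (ρ : Matrix ((i : ι) → H i) ((i : ι) → H i) ℂ)
    (E : (i : ι) → X i → A i → Matrix (H i) (H i) ℂ)
    (a : (i : ι) → A i) (x : (i : ι) → X i) : ℝ :=
  (Matrix.trace (ρ * prodOp (fun i => E i (x i) (a i)))).re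

/-- The operators `E x a` (for each input `x`) form POVMs: positive semidefinite and
summing to the identity. -/
def IsPOVMFamily {H : Type} [Fintype H] [DecidableEq H] {A X : Type} [Fintype A]
    (E : X → A → Matrix H H ℂ) : Prop :=
  ∀ x, (∀ a, (E x a).PosSemidef) ∧ (∑ a, E x a) = 1

/-- A multipartite state is genuinely multipartite nonlocal (GMNL) if some local POVMs
produce from it an outcome distribution which is not bilocal. -/
def IsGMNL {H : ι → Type} [∀ i, Fintype (H i)] [∀ i, DecidableEq (H i)]
    (ρ : Matrix ((i : ι) → H i) ((i : ι) → H i) ℂ) : Prop :=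
  ∃ (X A : ι → Type) (instX : ∀ i, Fintype (X i)) (instA : ∀ i, Fintype (A i))
    (instA' : ∀ i, DecidableEq (A i))
    (E : (i : ι) → X i → A i → Matrix (H i) (H i) ℂ),
    (∀ i, @IsPOVMFamily (H i) _ _ (A i) (X i) (instA i) (E i)) ∧
    ¬ @Bilocal ι _ _ A X instA instA' (born ρ E)

end Nonlocality

/-- Local Hilbert-space basis for a star network with `m` leaves and arbitrary edge
dimensions: the central party (`none`) holds the `A`-qudit of every edge, and leaf
party `some j` holds the `B`-qudit of edge `j`. -/
def starH2 {m : ℕ} (dA dB : Fin m → ℕ) : Option (Fin m) → Type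
  | none => (j : Fin m) → Fin (dA j)
  | some j => Fin (dB j)

instance starH2.fintype {m : ℕ} (dA dB : Fin m → ℕ) : ∀ i, Fintype (starH2 dA dB i)
  | none => inferInstanceAs (Fintype ((j : Fin m) → Fin (dA j)))
  | some j => inferInstanceAs (Fintype (Fin (dB j)))

instance starH2.decEq {m : ℕ} (dA dB : Fin m → ℕ) : ∀ i, DecidableEq (starH2 dA dB i)
  | none => inferInstanceAs (DecidableEq ((j : Fin m) → Fin (dA j)))
  | some j => inferInstanceAs (DecidableEq (Fin (dB j)))

/-- The star PEN state `⊗ⱼ ρ⁽ʲ⁾_{AⱼBⱼ}`: the central party shares the bipartite state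
`ρ j` with leaf party `j`, for every `j`. -/
def starState {m : ℕ} (dA dB : Fin m → ℕ)
    (ρ : (j : Fin m) → Matrix (Fin (dA j) × Fin (dB j)) (Fin (dA j) × Fin (dB j)) ℂ) :
    Matrix ((i : Option (Fin m)) → starH2 dA dB i)
           ((i : Option (Fin m)) → starH2 dA dB i) ℂ :=
  fun u v => ∏ j : Fin m, ρ j (u none j, u (some j)) (v none j, v (some j))

/-- The steered (unnormalized) state `tr_B((𝟙_A ⊗ F) ρ_{AB})` on `A`, for an operator
`F` on `B`. -/
def steered {da db : ℕ} (ρ : Matrix (Fin da × Fin db) (Fin da × Fin db) ℂ)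
    (F : Matrix (Fin db) (Fin db) ℂ) : Matrix (Fin da) (Fin da) ℂ :=
  fun a1 a2 => ∑ b1, ∑ b2, F b1 b2 * ρ (a1, b2) (a2, b1)

/-- A bipartite state `ρ_{AB}` is nonsteerable from `B` to `A` if every finite family of
POVMs on `B` admits a local-hidden-state model: `tr_B((𝟙_A ⊗ F_{b|y}) ρ) =
∑_λ q(λ) P_B(b|y,λ) σ_λ` with `σ_λ` density matrices on `A`. -/
def Nonsteerable {da db : ℕ}
    (ρ : Matrix (Fin da × Fin db) (Fin da × Fin db) ℂ) : Prop :=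
  ∀ (Y B : Type) (_ : Fintype Y) (_ : Fintype B)
    (F : Y → B → Matrix (Fin db) (Fin db) ℂ),
    (∀ y, (∀ b, (F y b).PosSemidef) ∧ (∑ b, F y b) = 1) →
    ∃ (L : Type) (_ : Fintype L) (q : L → ℝ) (PB : L → Y → B → ℝ)
      (σ : L → Matrix (Fin da) (Fin da) ℂ),
      (∀ l, 0 ≤ q l) ∧ (∑ l, q l = 1) ∧
      (∀ l y, (∀ b, 0 ≤ PB l y b) ∧ (∑ b, PB l y b = 1)) ∧
      (∀ l, (σ l).PosSemidef ∧ (σ l).trace = 1) ∧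
      ∀ y b, steered ρ (F y b) = ∑ l, ((q l * PB l y b : ℝ) : ℂ) • σ l

/-!
Nonsteerability of `ρ⁽⁰⁾` gives a local-hidden-state model
`tr_{B₁}((𝟙 ⊗ F_{b|y}) ρ⁽⁰⁾) = ∑_λ q(λ) P(b|y,λ) σ_λ` for the POVMs of leaf `B₁`. Contracting the
star state with the effect of `B₁` therefore replaces `ρ⁽⁰⁾` by this mixture, so that
`P = ∑_λ q(λ) P(b₁|y₁,λ) P_λ` where `P_λ` is the Born distribution, on the remaining parties, of
the state `σ_λ ⊗ ⊗_{j ≥ 2} ρ⁽ʲ⁾`. Born distributions are nonsignalling, so this is a bilocal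
decomposition across `B₁ | rest`.
-/

open Matrix
open scoped MatrixOrder

lemma Matrix.PosSemidef.re_trace_mul_nonneg {n : Type} [Fintype n]
    {A B : Matrix n n ℂ} (hA : A.PosSemidef) (hB : B.PosSemidef) :
    0 ≤ (A * B).trace.re := by
  classical
  obtain ⟨C, rfl⟩ := CStarAlgebra.nonneg_iff_eq_star_mul_self.mp hA.nonneg
  rw [Matrix.mul_assoc, trace_mul_comm, star_eq_conjTranspose]
  exact (Complex.nonneg_iff.mp (hB.mul_mul_conjTranspose_same C).trace_nonneg).1

lemma Matrix.trace_submatrix_equiv {m n R : Type} [Fintype m] [Fintype n] [AddCommMonoid R]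
    (M : Matrix n n R) (e : m ≃ n) : (M.submatrix e e).trace = M.trace :=
  e.sum_comp fun i => M i i

section ProdOp

variable {ι : Type} [Fintype ι] {H : ι → Type}

lemma prodOp_mul [DecidableEq ι] [∀ i, Fintype (H i)] (M N : (i : ι) → Matrix (H i) (H i) ℂ) :
    prodOp (fun i => M i * N i) = prodOp M * prodOp N := by
  ext u v
  simp only [prodOp, mul_apply, Finset.prod_univ_sum, Fintype.piFinset_univ,
    Finset.prod_mul_distrib]

lemma prodOp_conjTranspose (M : (i : ι) → Matrix (H i) (H i) ℂ) :
    (prodOp M)ᴴ = prodOp (fun i => (M i)ᴴ) := by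
  ext u v
  exact star_prod _ _

lemma prodOp_one [∀ i, DecidableEq (H i)] :
    prodOp (fun i => (1 : Matrix (H i) (H i) ℂ)) = 1 := by
  ext u v
  by_cases h : u = v
  · subst h
    simp [prodOp]
  · obtain ⟨i, hi⟩ := Function.ne_iff.mp h
    rw [one_apply_ne h]
    exact Finset.prod_eq_zero (Finset.mem_univ i) (one_apply_ne hi)

lemma sum_prodOp [DecidableEq ι] {A : ι → Type} [∀ i, Fintype (A i)]
    (G : (i : ι) → A i → Matrix (H i) (H i) ℂ) :
    ∑ a : (i : ι) → A i, prodOp (fun i => G i (a i)) = prodOp (fun i => ∑ b, G i b) := by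
  ext u v
  simp only [Matrix.sum_apply, prodOp, Finset.prod_univ_sum, Fintype.piFinset_univ]

lemma posSemidef_prodOp [DecidableEq ι] [∀ i, Fintype (H i)]
    {M : (i : ι) → Matrix (H i) (H i) ℂ} (hM : ∀ i, (M i).PosSemidef) : (prodOp M).PosSemidef := by
  classical
  choose B hB using fun i => CStarAlgebra.nonneg_iff_eq_star_mul_self.mp (hM i).nonneg
  have h : prodOp M = (prodOp B)ᴴ * prodOp B := by
    rw [prodOp_conjTranspose, ← prodOp_mul]
    exact congrArg prodOp (funext hB)
  rw [h]
  exact posSemidef_conjTranspose_mul_self _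

lemma trace_prodOp [DecidableEq ι] [∀ i, Fintype (H i)] (M : (i : ι) → Matrix (H i) (H i) ℂ) :
    (prodOp M).trace = ∏ i, (M i).trace := by
  simp only [trace, diag, prodOp, Finset.prod_univ_sum, Fintype.piFinset_univ]

end ProdOp

section Born

variable {ι : Type} [Fintype ι] [DecidableEq ι] {A X : ι → Type}

lemma sum_prod_of_forall_eq [∀ i, Fintype (A i)] [∀ i, DecidableEq (A i)] {R : Type}
    [CommSemiring R] (f : (i : ι) → A i → R) (S : Finset ι) (aS : (i : S) → A i) :
    ∑ b : {b : (i : ι) → A i // ∀ i : S, b i = aS i}, ∏ i, f i (b.1 i) =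
      ∏ i, if h : i ∈ S then f i (aS ⟨i, h⟩) else ∑ a, f i a := by
  set t : (i : ι) → Finset (A i) := fun i => if h : i ∈ S then {aS ⟨i, h⟩} else Finset.univ
  have ht : ∀ b, b ∈ Fintype.piFinset t ↔ ∀ i : S, b i = aS i := by
    intro b
    simp only [Fintype.mem_piFinset, t]
    refine ⟨fun hb i => by simpa [i.2] using hb i, fun hb i => ?_⟩
    by_cases h : i ∈ S
    · simpa [h] using hb ⟨i, h⟩
    · simp [h]
  rw [← Finset.sum_subtype _ ht (fun b => ∏ i, f i (b i)), ← Finset.prod_univ_sum]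
  refine Finset.prod_congr rfl fun i _ => ?_
  by_cases h : i ∈ S <;> simp [t, h]

variable {H : ι → Type} [∀ i, Fintype (H i)] [∀ i, DecidableEq (H i)]

lemma isDist_born [∀ i, Fintype (A i)] {ρ : Matrix ((i : ι) → H i) ((i : ι) → H i) ℂ}
    (hρ : ρ.PosSemidef) (hρ₁ : ρ.trace = 1)
    {E : (i : ι) → X i → A i → Matrix (H i) (H i) ℂ} (hE : ∀ i, IsPOVMFamily (E i)) :
    IsDist (born ρ E) := by
  refine ⟨fun a x => hρ.re_trace_mul_nonneg (posSemidef_prodOp fun i => (hE i (x i)).1 (a i)),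
    fun x => ?_⟩
  simp only [born]
  rw [← Complex.re_sum, ← trace_sum, ← Matrix.mul_sum, sum_prodOp]
  simp [fun i => (hE i (x i)).2, prodOp_one, hρ₁]

lemma marginal_born [∀ i, Fintype (A i)] [∀ i, DecidableEq (A i)]
    (ρ : Matrix ((i : ι) → H i) ((i : ι) → H i) ℂ)
    {E : (i : ι) → X i → A i → Matrix (H i) (H i) ℂ} (hE : ∀ i, IsPOVMFamily (E i))
    (S : Finset ι) (aS : (i : S) → A i) (x : (i : ι) → X i) :
    marginal (born ρ E) S aS x =
      (ρ * prodOp (fun i => if h : i ∈ S then E i (x i) (aS ⟨i, h⟩) else 1)).trace.re := by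
  have hsum : ∑ b : {b : (i : ι) → A i // ∀ i : S, b i = aS i},
      prodOp (fun i => E i (x i) (b.1 i)) =
        prodOp (fun i => if h : i ∈ S then E i (x i) (aS ⟨i, h⟩) else 1) := by
    ext u v
    simp only [Matrix.sum_apply, prodOp]
    rw [sum_prod_of_forall_eq (fun i a => E i (x i) a (u i) (v i))]
    refine Finset.prod_congr rfl fun i _ => ?_
    split_ifs
    · rfl
    · rw [← Matrix.sum_apply, (hE i (x i)).2]
  rw [marginal, ← hsum, Matrix.mul_sum, trace_sum, Complex.re_sum]
  rfl

lemma nonSignalling_born [∀ i, Fintype (A i)] [∀ i, DecidableEq (A i)]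
    (ρ : Matrix ((i : ι) → H i) ((i : ι) → H i) ℂ)
    {E : (i : ι) → X i → A i → Matrix (H i) (H i) ℂ} (hE : ∀ i, IsPOVMFamily (E i)) :
    NonSignalling (born ρ E) := by
  intro S aS x x' hx
  simp only [marginal_born ρ hE]
  congr 4 with i
  split_ifs with h
  · rw [hx i h]
  · rfl

lemma born_sum_smul {L : Type} [Fintype L] (c : L → ℝ)
    (τ : L → Matrix ((i : ι) → H i) ((i : ι) → H i) ℂ)
    (E : (i : ι) → X i → A i → Matrix (H i) (H i) ℂ) (a : (i : ι) → A i) (x : (i : ι) → X i) :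
    born (∑ l, (c l : ℂ) • τ l) E a x = ∑ l, c l * born (τ l) E a x := by
  simp [born, Matrix.sum_mul, trace_sum, Complex.re_sum]

end Born

section SplitOff

variable {ι : Type} {H : ι → Type} {i₀ : ι} {p : ι → Prop} [DecidablePred p]

def piSplitOff (hp : ∀ i, p i ↔ i ≠ i₀) : ((i : ι) → H i) ≃ H i₀ × ((i : {i // p i}) → H i) where
  toFun u := (u i₀, fun i => u i)
  invFun w i := if h : p i then w.2 ⟨i, h⟩ else (not_not.mp (mt (hp i).2 h)) ▸ w.1
  left_inv u := by
    funext i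
    by_cases h : p i
    · simp [h]
    · obtain rfl := not_not.mp (mt (hp i).2 h)
      simp [h]
  right_inv w := by
    have h₀ : ¬ p i₀ := fun h => (hp i₀).1 h rfl
    ext i
    · simp [h₀]
    · simp [i.2]

lemma prod_eq_mul_prod_of_iff_ne [Fintype ι] [DecidableEq ι] {M : Type} [CommMonoid M]
    (hp : ∀ i, p i ↔ i ≠ i₀) (f : ι → M) :
    ∏ i, f i = f i₀ * ∏ i : {i // p i}, f i := by
  rw [Fintype.prod_eq_mul_prod_subtype_ne f i₀]
  congr 1
  exact Fintype.prod_equiv (Equiv.subtypeEquivRight fun i => (hp i).symm) _ _ fun _ => rfl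

variable (hp : ∀ i, p i ↔ i ≠ i₀)

@[simp] lemma piSplitOff_symm_apply_self (w : H i₀ × ((i : {i // p i}) → H i)) :
    (piSplitOff hp).symm w i₀ = w.1 :=
  congrArg Prod.fst ((piSplitOff hp).apply_symm_apply w)

@[simp] lemma piSplitOff_symm_apply_val (w : H i₀ × ((i : {i // p i}) → H i)) (i : {i // p i}) :
    (piSplitOff hp).symm w i = w.2 i :=
  congrFun (congrArg Prod.snd ((piSplitOff hp).apply_symm_apply w)) i

end SplitOff

section SteeredAt

variable {ι : Type} [Fintype ι] [DecidableEq ι] {H : ι → Type} [∀ i, Fintype (H i)]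
  {i₀ : ι} {p : ι → Prop} [DecidablePred p] (hp : ∀ i, p i ↔ i ≠ i₀)

/-- `tr_{i₀}((F ⊗ 𝟙) ρ)` on the remaining parties: the multipartite analogue of `steered`. -/
def steeredAt (ρ : Matrix ((i : ι) → H i) ((i : ι) → H i) ℂ) (F : Matrix (H i₀) (H i₀) ℂ) :
    Matrix ((i : {i // p i}) → H i) ((i : {i // p i}) → H i) ℂ :=
  fun u v =>
    ∑ b₁, ∑ b₂, F b₁ b₂ * ρ ((piSplitOff hp).symm (b₂, u)) ((piSplitOff hp).symm (b₁, v))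

lemma trace_mul_prodOp_eq_steeredAt (ρ : Matrix ((i : ι) → H i) ((i : ι) → H i) ℂ)
    (M : (i : ι) → Matrix (H i) (H i) ℂ) :
    (ρ * prodOp M).trace =
      (steeredAt hp ρ (M i₀) * prodOp (fun i : {i // p i} => M i)).trace := by
  set e := piSplitOff (H := H) hp
  have hM : ∀ w w', prodOp M (e.symm w) (e.symm w') =
      M i₀ w.1 w'.1 * prodOp (fun i : {i // p i} => M i) w.2 w'.2 := by
    intro w w'
    simp only [prodOp]
    rw [prod_eq_mul_prod_of_iff_ne hp]
    simp [e]
  calc (ρ * prodOp M).trace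
      = ∑ w, ∑ w', ρ (e.symm w) (e.symm w') * prodOp M (e.symm w') (e.symm w) := by
        simp only [trace, diag, mul_apply]
        rw [← e.symm.sum_comp]
        exact Finset.sum_congr rfl fun w _ => (e.symm.sum_comp _).symm
    _ = _ := by
        simp only [hM, trace, diag, mul_apply, steeredAt, Fintype.sum_prod_type, Finset.sum_mul]
        rw [Finset.sum_comm]
        refine Finset.sum_congr rfl fun u _ => ?_
        rw [Finset.sum_comm, Finset.sum_congr rfl fun b₁ _ => Finset.sum_comm, Finset.sum_comm]
        refine Finset.sum_congr rfl fun v _ => Finset.sum_congr rfl fun b₁ _ =>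
          Finset.sum_congr rfl fun b₂ _ => ?_
        ring

lemma born_eq_born_steeredAt [∀ i, DecidableEq (H i)] {A X : ι → Type}
    (ρ : Matrix ((i : ι) → H i) ((i : ι) → H i) ℂ) (E : (i : ι) → X i → A i → Matrix (H i) (H i) ℂ)
    (a : (i : ι) → A i) (x : (i : ι) → X i) :
    born ρ E a x = born (steeredAt hp ρ (E i₀ (x i₀) (a i₀))) (fun i : {i // p i} => E i)
      (fun i => a i) (fun i => x i) :=
  congrArg Complex.re (trace_mul_prodOp_eq_steeredAt hp ρ _)

end SteeredAt

section Star

variable {n : ℕ} {dA dB : Fin n → ℕ} {j₀ : Fin n} {p : Option (Fin n) → Prop}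

def starCenter (hp : ∀ i, p i ↔ i ≠ some j₀) : {i // p i} :=
  ⟨none, (hp none).2 (Option.some_ne_none j₀).symm⟩

def starLeaf (hp : ∀ i, p i ↔ i ≠ some j₀) (j : {j // j ≠ j₀}) : {i // p i} :=
  ⟨some j, (hp _).2 fun h => j.2 (Option.some_injective _ h)⟩

def starSplit (hp : ∀ i, p i ↔ i ≠ some j₀) :
    ((i : {i // p i}) → starH2 dA dB i.1) ≃
      Fin (dA j₀) × ((j : {j // j ≠ j₀}) → Fin (dA j) × Fin (dB j)) where
  toFun u := (u (starCenter hp) j₀, fun j => (u (starCenter hp) j, u (starLeaf hp j)))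
  invFun w
    | ⟨none, _⟩ => (Equiv.piSplitAt j₀ _).symm (w.1, fun j => (w.2 j).1)
    | ⟨some j, hj⟩ => (w.2 ⟨j, fun h => (hp _).1 hj (congrArg some h)⟩).2
  left_inv u := by
    funext ⟨i, hi⟩
    cases i with
    | none => exact (Equiv.piSplitAt j₀ _).symm_apply_apply (u (starCenter hp))
    | some j => rfl
  right_inv w := by
    refine Prod.ext ?_ (funext fun j => Prod.ext ?_ rfl)
    · simp [starCenter]
    · simp [starCenter, j.2]

open scoped Kronecker

variable (hp : ∀ i, p i ↔ i ≠ some j₀)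

/-- The state of all parties but leaf `j₀` of the star network when the center holds `σ` in
place of its half of edge `j₀`. -/
def starStateWithout (σ : Matrix (Fin (dA j₀)) (Fin (dA j₀)) ℂ)
    (ρ : (j : Fin n) → Matrix (Fin (dA j) × Fin (dB j)) (Fin (dA j) × Fin (dB j)) ℂ) :
    Matrix ((i : {i // p i}) → starH2 dA dB i.1) ((i : {i // p i}) → starH2 dA dB i.1) ℂ :=
  (σ ⊗ₖ prodOp (fun j : {j // j ≠ j₀} => ρ j)).submatrix (starSplit hp) (starSplit hp)

variable (ρ : (j : Fin n) → Matrix (Fin (dA j) × Fin (dB j)) (Fin (dA j) × Fin (dB j)) ℂ)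

lemma steeredAt_starState [DecidablePred p]
    (F : Matrix (starH2 dA dB (some j₀)) (starH2 dA dB (some j₀)) ℂ) :
    steeredAt (H := starH2 dA dB) hp (starState dA dB ρ) F =
      starStateWithout hp (steered (ρ j₀) F) ρ := by
  ext u v
  have hcenter : ∀ w, (piSplitOff (H := starH2 dA dB) hp).symm w none = w.2 (starCenter hp) :=
    fun w => piSplitOff_symm_apply_val hp w (starCenter hp)
  have hleaf : ∀ w (j : {j // j ≠ j₀}),
      (piSplitOff (H := starH2 dA dB) hp).symm w (some j) = w.2 (starLeaf hp j) :=
    fun w j => piSplitOff_symm_apply_val hp w (starLeaf hp j)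
  have hsplit : ∀ w w', starState dA dB ρ ((piSplitOff hp).symm w) ((piSplitOff hp).symm w') =
      ρ j₀ ((w.2 (starCenter hp) : (j : Fin n) → Fin (dA j)) j₀, w.1)
        ((w'.2 (starCenter hp) : (j : Fin n) → Fin (dA j)) j₀, w'.1) *
      prodOp (fun j : {j // j ≠ j₀} => ρ j) (starSplit hp w.2).2 (starSplit hp w'.2).2 := by
    intro w w'
    unfold starState
    rw [Fintype.prod_eq_mul_prod_subtype_ne _ j₀]
    simp only [hcenter, hleaf, piSplitOff_symm_apply_self]
    rfl
  simp only [steeredAt, hsplit, starStateWithout, submatrix_apply, kroneckerMap_apply, steered,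
    Finset.sum_mul, mul_assoc]
  rfl

lemma starStateWithout_sum_smul {L : Type} [Fintype L] (c : L → ℂ)
    (σ : L → Matrix (Fin (dA j₀)) (Fin (dA j₀)) ℂ) :
    starStateWithout hp (∑ l, c l • σ l) ρ = ∑ l, c l • starStateWithout hp (σ l) ρ := by
  ext u v
  simp [starStateWithout, Matrix.sum_apply, Finset.sum_mul, mul_assoc]

lemma posSemidef_starStateWithout {σ : Matrix (Fin (dA j₀)) (Fin (dA j₀)) ℂ} (hσ : σ.PosSemidef)
    (hρ : ∀ j, (ρ j).PosSemidef) : (starStateWithout hp σ ρ).PosSemidef :=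
  (hσ.kronecker (posSemidef_prodOp fun j : {j // j ≠ j₀} => hρ j)).submatrix _

lemma trace_starStateWithout [DecidablePred p] {σ : Matrix (Fin (dA j₀)) (Fin (dA j₀)) ℂ}
    (hσ : σ.trace = 1) (hρ : ∀ j, (ρ j).trace = 1) : (starStateWithout hp σ ρ).trace = 1 := by
  unfold starStateWithout
  rw [trace_submatrix_equiv, trace_kronecker, trace_prodOp, hσ]
  simp [hρ]

end Star

section Splitting

variable {ι : Type} [Fintype ι] [DecidableEq ι] {A X : ι → Type} [∀ i, Fintype (A i)]
  [∀ i, DecidableEq (A i)]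

lemma nonSignalling_of_subsingleton [Subsingleton ι] {P : ((i : ι) → A i) → ((i : ι) → X i) → ℝ}
    (hP : IsDist P) : NonSignalling P := by
  intro S aS x x' hx
  rcases S.eq_empty_or_nonempty with rfl | ⟨i₀, hi₀⟩
  · have hall : ∀ x, marginal P ∅ aS x = 1 := fun x =>
      (Finset.sum_subtype Finset.univ (by simp) fun b => P b x).symm.trans (hP.2 x)
    rw [hall, hall]
  · obtain rfl : x = x' := funext fun i => Subsingleton.elim i i₀ ▸ hx i₀ hi₀
    rfl

/-- The remaining parties are given by a predicate `p` (in practice `p i ↔ i ≠ i₀`) so that both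
`{i // i ≠ i₀}` and the complement `{i // i ∉ {i₀}}` used by `Bilocal` can serve as their type. -/
def SplitsOff (P : ((i : ι) → A i) → ((i : ι) → X i) → ℝ) (i₀ : ι) (p : ι → Prop)
    [DecidablePred p] : Prop :=
  ∃ (L : Type) (_ : Fintype L) (q : L → ℝ) (P₁ : L → X i₀ → A i₀ → ℝ)
    (P₂ : L → (((i : {i // p i}) → A i.1) → ((i : {i // p i}) → X i.1) → ℝ)),
    (∀ l, 0 ≤ q l) ∧ (∑ l, q l = 1) ∧
    (∀ l y, (∀ b, 0 ≤ P₁ l y b) ∧ (∑ b, P₁ l y b = 1)) ∧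
    (∀ l, IsDist (P₂ l) ∧ NonSignalling (P₂ l)) ∧
    ∀ a x, P a x = ∑ l, q l * P₁ l (x i₀) (a i₀) * P₂ l (fun i => a i.1) (fun i => x i.1)

theorem SplitsOff.bilocal [Nontrivial ι] {P : ((i : ι) → A i) → ((i : ι) → X i) → ℝ} {i₀ : ι}
    (hP : SplitsOff P i₀ (· ∉ ({i₀} : Finset ι))) : Bilocal P := by
  obtain ⟨L, _, q, P₁, P₂, hq0, hq1, hP₁, hP₂, hP⟩ := hP
  refine ⟨L, inferInstance, fun M l => if M = ({i₀} : Finset ι) then q l else 0,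
    fun M l a x => if h : i₀ ∈ M then P₁ l (x ⟨i₀, h⟩) (a ⟨i₀, h⟩) else 0,
    fun M l a x => if h : M = ({i₀} : Finset ι) then
      P₂ l (fun i => a ⟨i, h ▸ i.2⟩) (fun i => x ⟨i, h ▸ i.2⟩) else 0, ?_, ?_, ?_, ?_⟩
  · intro M l
    dsimp only
    split_ifs
    exacts [hq0 l, le_rfl]
  · rw [Fintype.sum_eq_single ({i₀} : Finset ι) fun M hM => by simp [hM]]
    simpa using hq1
  · intro M l hql
    obtain rfl : M = ({i₀} : Finset ι) := by
      by_contra hM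
      exact hql (if_neg hM)
    have hP₁' : IsDist fun (a : (i : ({i₀} : Finset ι)) → A i)
        (x : (i : ({i₀} : Finset ι)) → X i) => P₁ l (x default) (a default) :=
      ⟨fun a x => (hP₁ l _).1 _, fun x =>
        ((Equiv.piUnique fun i : ({i₀} : Finset ι) => A i).sum_comp
          (P₁ l (x default))).trans (hP₁ l _).2⟩
    simp only [dif_pos (Finset.mem_singleton_self i₀)]
    exact ⟨Finset.singleton_nonempty i₀, Finset.singleton_ne_univ i₀,
      hP₁', (hP₂ l).1, nonSignalling_of_subsingleton hP₁', (hP₂ l).2⟩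
  · intro a x
    rw [hP a x, Fintype.sum_eq_single ({i₀} : Finset ι) fun M hM => by simp [hM]]
    simp

end Splitting

theorem splitsOff_born_starState {n : ℕ} {dA dB : Fin n → ℕ}
    {ρ : (j : Fin n) → Matrix (Fin (dA j) × Fin (dB j)) (Fin (dA j) × Fin (dB j)) ℂ}
    (hρ : ∀ j, (ρ j).PosSemidef ∧ (ρ j).trace = 1) {j₀ : Fin n} (hns : Nonsteerable (ρ j₀))
    {X A : Option (Fin n) → Type} [∀ i, Fintype (X i)] [∀ i, Fintype (A i)]
    [∀ i, DecidableEq (A i)]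
    {E : (i : Option (Fin n)) → X i → A i → Matrix (starH2 dA dB i) (starH2 dA dB i) ℂ}
    (hE : ∀ i, IsPOVMFamily (E i)) (p : Option (Fin n) → Prop) [DecidablePred p]
    (hp : ∀ i, p i ↔ i ≠ some j₀) :
    SplitsOff (born (starState dA dB ρ) E) (some j₀) p := by
  obtain ⟨L, _, q, PB, σ, hq0, hq1, hPB, hσ, hsteer⟩ :=
    hns (X (some j₀)) (A (some j₀)) inferInstance inferInstance (E (some j₀)) (hE (some j₀))
  refine ⟨L, inferInstance, q, PB,
    fun l => born (starStateWithout hp (σ l) ρ) (fun i : {i // p i} => E i),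
    hq0, hq1, hPB, fun l => ⟨?_, nonSignalling_born _ fun i => hE i⟩, fun a x => ?_⟩
  · exact isDist_born (posSemidef_starStateWithout hp ρ (hσ l).1 fun j => (hρ j).1)
      (trace_starStateWithout hp ρ (hσ l).2 fun j => (hρ j).2) fun i => hE i
  · rw [born_eq_born_steeredAt hp, steeredAt_starState hp ρ, hsteer, starStateWithout_sum_smul,
      born_sum_smul]

theorem star_nonsteerable_not_GMNL (m : ℕ) (dA dB : Fin (m + 1) → ℕ)
    (ρ : (j : Fin (m + 1)) →
      Matrix (Fin (dA j) × Fin (dB j)) (Fin (dA j) × Fin (dB j)) ℂ)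
    (hρ : ∀ j, (ρ j).PosSemidef ∧ (ρ j).trace = 1)
    (hns : Nonsteerable (ρ 0)) :
    (∀ (X A : Option (Fin (m + 1)) → Type)
       (instX : ∀ i, Fintype (X i)) (instA : ∀ i, Fintype (A i))
       (instA' : ∀ i, DecidableEq (A i))
       (E : (i : Option (Fin (m + 1))) → X i → A i →
             Matrix (starH2 dA dB i) (starH2 dA dB i) ℂ),
       (∀ i, IsPOVMFamily (E i)) →
       ∃ (L : Type) (_ : Fintype L) (q : L → ℝ)
         (P₁ : L → X (some 0) → A (some 0) → ℝ)
         (P₂ : L → (((i : {i : Option (Fin (m + 1)) // i ≠ some 0}) → A i.1) →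
                    ((i : {i : Option (Fin (m + 1)) // i ≠ some 0}) → X i.1) → ℝ)),
         (∀ l, 0 ≤ q l) ∧ (∑ l, q l = 1) ∧
         (∀ l y, (∀ b, 0 ≤ P₁ l y b) ∧ (∑ b, P₁ l y b = 1)) ∧
         (∀ l, IsDist (P₂ l) ∧ NonSignalling (P₂ l)) ∧
         (∀ a x, born (starState dA dB ρ) E a x =
            ∑ l, q l * P₁ l (x (some 0)) (a (some 0)) *
              P₂ l (fun i => a i.1) (fun i => x i.1)))
    ∧ ¬ IsGMNL (starState dA dB ρ) := by
  refine ⟨fun X A _ _ _ E hE => splitsOff_born_starState hρ hns hE _ fun _ => Iff.rfl, ?_⟩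
  rintro ⟨X, A, _, _, _, E, hE, hnot⟩
  exact hnot (splitsOff_born_starState hρ hns hE _ fun _ => Finset.mem_singleton.not).bilocal
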